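/- Let G be a graph whose components are complete graphs: for each x ∈ 𝒳, the component on vertex set {(x,y) : (x,y) ∈ S_{XY}} is complete. For the distribution p on S_{XY}, the graph entropy satisfies H_G(X,Y) = H(Y|X), the conditional Shannon entropy of Y given X. -/

import Mathlib

/-!
An independent set of `G` meets each row `{x} × 𝒴` at most once. So for any admissible
conditional law `q` of `W ∋ V`, the measure `p_X(v.1) · P(W = s)` restricted to the support
of the joint law `p(v) q(v, s)` of `(V, W)` has mass at most one, and the Gibbs inequality
against it gives `I(W; V) ≥ H(Y | X)`. Equality holds when `W` is the graph of a random
function `g : 𝒳 → 𝒴` with independent values `g x ∼ p(· | x)` and `V = (X, g X)` for an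
independent `X ∼ p_X`: then `P(V = v | W = s) = p_X(v.1)` for every `v ∈ s`.
-/

open scoped Classical

/-- Graph entropy `H_G(X) = min_{X ∈ W ∈ Γ(G)} I(W;X)`. -/
noncomputable def graphEntropy {V : Type*} [Fintype V]
    (G : SimpleGraph V) (P : V → ℝ) : ℝ :=
  sInf { r : ℝ | ∃ q : V → Finset V → ℝ,
    (∀ v s, 0 ≤ q v s) ∧ (∀ v, ∑ s : Finset V, q v s = 1) ∧
    (∀ v s, 0 < q v s → v ∈ s ∧ (↑s : Set V).Pairwise (fun a b => ¬ G.Adj a b)) ∧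
    r = ∑ v : V, ∑ s : Finset V,
          P v * q v s * Real.log (q v s / (∑ v' : V, P v' * q v' s)) }

open Finset Real

theorem sub_le_mul_log_div {J M : ℝ} (hJ : 0 ≤ J) (hM : 0 ≤ M) (hJM : 0 < J → 0 < M) :
    J - M ≤ J * log (J / M) := by
  rcases hJ.eq_or_lt with rfl | hJ
  · simpa using hM
  · have hM := hJM hJ
    calc J - M = J * (1 - (J / M)⁻¹) := by field_simp
      _ ≤ J * log (J / M) :=
        mul_le_mul_of_nonneg_left (one_sub_inv_le_log_of_pos (div_pos hJ hM)) hJ.le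

theorem sum_mul_log_div_nonneg {ι : Type*} (s : Finset ι) {J M : ι → ℝ}
    (hJ : ∀ i ∈ s, 0 ≤ J i) (hM : ∀ i ∈ s, 0 ≤ M i)
    (hJM : ∀ i ∈ s, 0 < J i → 0 < M i) (hsum : ∑ i ∈ s, M i ≤ ∑ i ∈ s, J i) :
    0 ≤ ∑ i ∈ s, J i * log (J i / M i) :=
  calc 0 ≤ ∑ i ∈ s, (J i - M i) := by rw [sum_sub_distrib]; linarith
    _ ≤ ∑ i ∈ s, J i * log (J i / M i) :=
      sum_le_sum fun i hi => sub_le_mul_log_div (hJ i hi) (hM i hi) (hJM i hi)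

theorem sum_prod_of_apply_eq {ι α R : Type*} [Fintype ι] [Fintype α]
    [CommSemiring R] (κ : ι → α → R) (hκ : ∀ j, ∑ b, κ j b = 1) (i : ι) (a : α) :
    ∑ g : ι → α with g i = a, ∏ j, κ j (g j) = κ i a := by
  set F : ι → α → R := fun j b => if j = i ∧ b ≠ a then 0 else κ j b
  calc ∑ g : ι → α with g i = a, ∏ j, κ j (g j) = ∑ g : ι → α, ∏ j, F j (g j) := by
        rw [sum_filter]
        refine sum_congr rfl fun g _ => ?_
        split_ifs with hg
        · refine prod_congr rfl fun j _ => ?_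
          simp only [F]
          rw [if_neg]
          rintro ⟨rfl, h⟩
          exact h hg
        · exact (prod_eq_zero (mem_univ i) (by simp [F, hg])).symm
    _ = ∏ j, ∑ b, F j b := (Fintype.prod_sum F).symm
    _ = κ i a := by
        rw [prod_eq_single i (fun j _ hj => by simpa [F, hj] using hκ j) (by simp)]
        simp [F]

section Kernel

variable {V : Type*} [Fintype V] {P : V → ℝ} {q : V → Finset V → ℝ}

variable (P q) in
noncomputable def outputLaw (s : Finset V) : ℝ := ∑ v, P v * q v s

variable (P q) in
noncomputable def mutualInfo : ℝ := ∑ v, ∑ s, P v * q v s * log (q v s / outputLaw P q s)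

theorem mul_le_outputLaw (hP : ∀ v, 0 ≤ P v) (hq0 : ∀ v s, 0 ≤ q v s) (v : V)
    (s : Finset V) : P v * q v s ≤ outputLaw P q s :=
  single_le_sum (f := fun v => P v * q v s) (fun v _ => mul_nonneg (hP v) (hq0 v s)) (mem_univ v)

theorem outputLaw_nonneg (hP : ∀ v, 0 ≤ P v) (hq0 : ∀ v s, 0 ≤ q v s) (s : Finset V) :
    0 ≤ outputLaw P q s :=
  sum_nonneg fun v _ => mul_nonneg (hP v) (hq0 v s)

theorem outputLaw_pos (hP : ∀ v, 0 ≤ P v) (hq0 : ∀ v s, 0 ≤ q v s) {v : V} {s : Finset V}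
    (hv : 0 < P v) (hvs : 0 < q v s) : 0 < outputLaw P q s :=
  (mul_pos hv hvs).trans_le (mul_le_outputLaw hP hq0 v s)

theorem sum_outputLaw (hq1 : ∀ v, ∑ s, q v s = 1) : ∑ s, outputLaw P q s = ∑ v, P v := by
  unfold outputLaw
  rw [sum_comm]
  simp_rw [← mul_sum, hq1, mul_one]

end Kernel

section

variable {𝒳 𝒴 : Type*} [Fintype 𝒴] (p : 𝒳 × 𝒴 → ℝ)

noncomputable def marginal (x : 𝒳) : ℝ := ∑ y, p (x, y)

-- Rows of mass zero get the uniform law, so that every row is a probability vector.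
noncomputable def condProb (x : 𝒳) (y : 𝒴) : ℝ :=
  if marginal p x = 0 then (Fintype.card 𝒴 : ℝ)⁻¹ else p (x, y) / marginal p x

abbrev Supp : Type _ := {a : 𝒳 × 𝒴 // 0 < p a}

variable {p}

theorem marginal_nonneg (hp0 : ∀ a, 0 ≤ p a) (x : 𝒳) : 0 ≤ marginal p x :=
  sum_nonneg fun y _ => hp0 (x, y)

theorem le_marginal (hp0 : ∀ a, 0 ≤ p a) (x : 𝒳) (y : 𝒴) : p (x, y) ≤ marginal p x :=
  single_le_sum (f := fun y => p (x, y)) (fun y _ => hp0 (x, y)) (mem_univ y)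

theorem marginal_pos (hp0 : ∀ a, 0 ≤ p a) (v : Supp p) : 0 < marginal p v.1.1 :=
  v.2.trans_le (le_marginal hp0 _ _)

theorem marginal_mul_condProb (hp0 : ∀ a, 0 ≤ p a) (x : 𝒳) (y : 𝒴) :
    marginal p x * condProb p x y = p (x, y) := by
  unfold condProb
  split_ifs with hx
  · rw [hx, zero_mul]
    linarith [le_marginal hp0 x y, hp0 (x, y)]
  · field_simp

theorem condProb_nonneg (hp0 : ∀ a, 0 ≤ p a) (x : 𝒳) (y : 𝒴) : 0 ≤ condProb p x y := by
  unfold condProb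
  split_ifs
  · positivity
  · exact div_nonneg (hp0 _) (marginal_nonneg hp0 x)

theorem condProb_pos (hp0 : ∀ a, 0 ≤ p a) (v : Supp p) : 0 < condProb p v.1.1 v.1.2 := by
  have hv : 0 < marginal p v.1.1 * condProb p v.1.1 v.1.2 := by
    rw [marginal_mul_condProb hp0]; exact v.2
  exact pos_of_mul_pos_right hv (marginal_nonneg hp0 _)

theorem sum_condProb [Nonempty 𝒴] (x : 𝒳) : ∑ y, condProb p x y = 1 := by
  unfold condProb
  split_ifs with hx
  · simp
  · rw [← sum_div]
    exact div_self hx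

variable [Fintype 𝒳]

variable (p) in
noncomputable def condEntropy : ℝ := -∑ a, p a * log (p a / marginal p a.1)

variable (p) in
theorem sum_marginal : ∑ x, marginal p x = ∑ a, p a :=
  (Fintype.sum_prod_type p).symm

theorem sum_support_eq_sum (hp0 : ∀ a, 0 ≤ p a) {f : 𝒳 × 𝒴 → ℝ}
    (hf : ∀ a, p a = 0 → f a = 0) : ∑ v : Supp p, f v.1 = ∑ a, f a :=
  Fintype.sum_of_injective Subtype.val Subtype.val_injective _ _
    (fun a ha => hf a ((not_lt.1 fun h => ha ⟨⟨a, h⟩, rfl⟩).antisymm (hp0 a))) fun _ => rfl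

theorem condEntropy_eq_sum_support (hp0 : ∀ a, 0 ≤ p a) :
    condEntropy p = -∑ v : Supp p, p v.1 * log (p v.1 / marginal p v.1.1) := by
  rw [condEntropy, sum_support_eq_sum hp0 (f := fun a => p a * log (p a / marginal p a.1))
    fun a ha => by rw [ha, zero_mul]]

theorem sum_marginal_le_of_injOn (hp0 : ∀ a, 0 ≤ p a) {t : Finset (Supp p)}
    (ht : Set.InjOn (fun v : Supp p => v.1.1) t) :
    ∑ v ∈ t, marginal p v.1.1 ≤ ∑ a, p a := by
  rw [← sum_image ht, ← sum_marginal]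
  exact sum_le_sum_of_subset_of_nonneg (subset_univ _) fun x _ _ => marginal_nonneg hp0 x

variable (p) in
noncomputable def marginalProd (q : Supp p → Finset (Supp p) → ℝ)
    (v : Supp p) (s : Finset (Supp p)) : ℝ :=
  if 0 < q v s then marginal p v.1.1 * outputLaw (fun v => p v.1) q s else 0

section LowerBound

variable {q : Supp p → Finset (Supp p) → ℝ}
  (hq0 : ∀ v s, 0 ≤ q v s) (hq1 : ∀ v, ∑ s, q v s = 1)

include hq0 hq1

theorem sum_marginalProd_le (hp0 : ∀ a, 0 ≤ p a) (hp1 : ∑ a, p a = 1)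
    (hq : ∀ v s, 0 < q v s → v ∈ s ∧ Set.InjOn (fun v : Supp p => v.1.1) s) :
    ∑ v, ∑ s, marginalProd p q v s ≤ 1 := by
  rw [sum_comm]
  calc ∑ s, ∑ v, marginalProd p q v s ≤ ∑ s, outputLaw (fun v => p v.1) q s := by
        refine sum_le_sum fun s _ => ?_
        have hinj : Set.InjOn (fun v : Supp p => v.1.1) (univ.filter fun v => 0 < q v s) :=
          fun a ha b hb hab => by
            simp only [coe_filter, mem_univ, true_and] at ha hb
            exact (hq a s ha).2 (mem_coe.2 (hq a s ha).1) (mem_coe.2 (hq b s hb).1) hab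
        calc ∑ v, marginalProd p q v s
            = (∑ v with 0 < q v s, marginal p v.1.1) * outputLaw (fun v => p v.1) q s := by
              simp only [marginalProd, sum_filter, sum_mul, ite_mul, zero_mul]
          _ ≤ 1 * outputLaw (fun v => p v.1) q s :=
              mul_le_mul_of_nonneg_right ((sum_marginal_le_of_injOn hp0 hinj).trans hp1.le)
                (outputLaw_nonneg (fun v => v.2.le) hq0 s)
          _ = outputLaw (fun v => p v.1) q s := one_mul _
    _ = 1 := by rw [sum_outputLaw hq1, sum_support_eq_sum hp0 fun _ => id, hp1]

theorem mutualInfo_eq_add_condEntropy (hp0 : ∀ a, 0 ≤ p a) :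
    mutualInfo (fun v => p v.1) q = ∑ v, ∑ s,
      p v.1 * q v s * log (p v.1 * q v s / marginalProd p q v s) + condEntropy p := by
  rw [condEntropy_eq_sum_support hp0, mutualInfo, ← sum_neg_distrib, ← sum_add_distrib]
  refine sum_congr rfl fun v _ => ?_
  rw [← mul_one (p v.1 * _), ← hq1 v, mul_sum, ← sum_neg_distrib, ← sum_add_distrib]
  refine sum_congr rfl fun s _ => ?_
  rcases (hq0 v s).eq_or_lt with hq_zero | hq_pos
  · simp [← hq_zero]
  have hratio : p v.1 * q v s / marginalProd p q v s =
      q v s / outputLaw (fun v => p v.1) q s * (p v.1 / marginal p v.1.1) := by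
    rw [marginalProd, if_pos hq_pos]
    ring
  rw [hratio, log_mul (div_pos hq_pos (outputLaw_pos (fun v => v.2.le) hq0 v.2 hq_pos)).ne'
    (div_pos v.2 (marginal_pos hp0 v)).ne']
  ring

theorem condEntropy_le_mutualInfo (hp0 : ∀ a, 0 ≤ p a) (hp1 : ∑ a, p a = 1)
    (hq : ∀ v s, 0 < q v s → v ∈ s ∧ Set.InjOn (fun v : Supp p => v.1.1) s) :
    condEntropy p ≤ mutualInfo (fun v => p v.1) q := by
  have hprod_nonneg : ∀ v s, 0 ≤ marginalProd p q v s := fun v s => by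
    unfold marginalProd
    split_ifs
    exacts [mul_nonneg (marginal_nonneg hp0 _) (outputLaw_nonneg (fun v => v.2.le) hq0 _), le_rfl]
  have hprod_pos : ∀ v s, 0 < p v.1 * q v s → 0 < marginalProd p q v s := fun v s h => by
    have hq_pos : 0 < q v s := pos_of_mul_pos_right h v.2.le
    rw [marginalProd, if_pos hq_pos]
    exact mul_pos (marginal_pos hp0 v) (outputLaw_pos (fun v => v.2.le) hq0 v.2 hq_pos)
  have hsum : ∑ v, ∑ s, marginalProd p q v s ≤ ∑ v, ∑ s, p v.1 * q v s := by
    simp_rw [← mul_sum, hq1, mul_one]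
    rw [sum_support_eq_sum hp0 fun _ => id, hp1]
    exact sum_marginalProd_le hq0 hq1 hp0 hp1 hq
  have hgibbs := sum_mul_log_div_nonneg (univ : Finset (Supp p × Finset (Supp p)))
    (J := fun i => p i.1.1 * q i.1 i.2) (M := fun i => marginalProd p q i.1 i.2)
    (fun i _ => mul_nonneg i.1.2.le (hq0 _ _)) (fun i _ => hprod_nonneg _ _)
    (fun i _ => hprod_pos _ _) (by simpa only [Fintype.sum_prod_type] using hsum)
  simp only [Fintype.sum_prod_type] at hgibbs
  rw [mutualInfo_eq_add_condEntropy hq0 hq1 hp0]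
  linarith

end LowerBound

variable (p) in
noncomputable def graphOn (g : 𝒳 → 𝒴) : Finset (Supp p) :=
  univ.filter fun v => g v.1.1 = v.1.2

variable (p) in
noncomputable def fnWeight (g : 𝒳 → 𝒴) : ℝ := ∏ x, condProb p x (g x)

variable (p) in
noncomputable def graphWeight (s : Finset (Supp p)) : ℝ :=
  ∑ g with graphOn p g = s, fnWeight p g

-- `P(W = s | V = v)` for `W = graphOn p g`, `V = (X, g X)`, `X ∼ marginal p` and independent
-- values `g x ∼ condProb p x`.
variable (p) in
noncomputable def graphKernel (v : Supp p) (s : Finset (Supp p)) : ℝ :=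
  if v ∈ s then graphWeight p s / condProb p v.1.1 v.1.2 else 0

theorem mem_graphOn {g : 𝒳 → 𝒴} {v : Supp p} :
    v ∈ graphOn p g ↔ g v.1.1 = v.1.2 := by
  simp [graphOn]

theorem graphOn_injOn (g : 𝒳 → 𝒴) : Set.InjOn (fun v : Supp p => v.1.1) (graphOn p g) := by
  intro a ha b hb (hx : a.1.1 = b.1.1)
  rw [mem_coe, mem_graphOn] at ha hb
  exact Subtype.ext (Prod.ext hx (by rw [← ha, ← hb, hx]))

theorem exists_graphOn_eq_of_graphWeight_ne_zero {s : Finset (Supp p)}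
    (hs : graphWeight p s ≠ 0) : ∃ g, graphOn p g = s ∧ ∀ x, condProb p x (g x) ≠ 0 := by
  obtain ⟨g, hg, hw⟩ := exists_ne_zero_of_sum_ne_zero hs
  exact ⟨g, (mem_filter.1 hg).2, fun x => prod_ne_zero_iff.1 hw x (mem_univ x)⟩

theorem sum_marginal_graphOn (hp0 : ∀ a, 0 ≤ p a) {g : 𝒳 → 𝒴}
    (hg : ∀ x, condProb p x (g x) ≠ 0) :
    ∑ v ∈ graphOn p g, marginal p v.1.1 = ∑ a, p a := by
  rw [← sum_marginal]
  refine sum_of_injOn (fun v => v.1.1) (graphOn_injOn g) (fun _ _ => mem_coe.2 (mem_univ _))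
    (fun x _ hx => ?_) fun _ _ => rfl
  have hp : p (x, g x) = 0 := by
    refine (not_lt.1 fun hpos => hx ⟨⟨(x, g x), hpos⟩, ?_, rfl⟩).antisymm (hp0 _)
    exact mem_coe.2 (mem_graphOn.2 rfl)
  rw [← marginal_mul_condProb hp0] at hp
  exact (mul_eq_zero.1 hp).resolve_right (hg x)

theorem graphKernel_nonneg (hp0 : ∀ a, 0 ≤ p a) (v : Supp p) (s : Finset (Supp p)) :
    0 ≤ graphKernel p v s := by
  unfold graphKernel
  split_ifs
  · exact div_nonneg (sum_nonneg fun g _ => prod_nonneg fun x _ => condProb_nonneg hp0 _ _)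
      (condProb_pos hp0 v).le
  · exact le_rfl

theorem graphKernel_pos {v : Supp p} {s : Finset (Supp p)} (h : 0 < graphKernel p v s) :
    v ∈ s ∧ Set.InjOn (fun v : Supp p => v.1.1) s := by
  unfold graphKernel at h
  split_ifs at h with hv
  · have hs : graphWeight p s ≠ 0 := fun h0 => by rw [h0, zero_div] at h; exact lt_irrefl 0 h
    obtain ⟨g, rfl, -⟩ := exists_graphOn_eq_of_graphWeight_ne_zero hs
    exact ⟨hv, graphOn_injOn g⟩
  · exact absurd h (lt_irrefl 0)

theorem sum_graphKernel (hp0 : ∀ a, 0 ≤ p a) (v : Supp p) : ∑ s, graphKernel p v s = 1 := by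
  have : Nonempty 𝒴 := ⟨v.1.2⟩
  have hfiber : ∀ s, (if v ∈ s then graphWeight p s else 0) =
      ∑ g with graphOn p g = s, if v ∈ graphOn p g then fnWeight p g else 0 := by
    intro s
    rw [graphWeight]
    split_ifs with hv
    · exact sum_congr rfl fun g hg => by rw [(mem_filter.1 hg).2, if_pos hv]
    · exact (sum_eq_zero fun g hg => by rw [(mem_filter.1 hg).2, if_neg hv]).symm
  calc ∑ s, graphKernel p v s
        = (∑ s, if v ∈ s then graphWeight p s else 0) / condProb p v.1.1 v.1.2 := by
          rw [sum_div]
          exact sum_congr rfl fun s _ => by rw [graphKernel, ite_div, zero_div]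
    _ = (∑ g with g v.1.1 = v.1.2, fnWeight p g) / condProb p v.1.1 v.1.2 := by
          simp_rw [hfiber, sum_fiberwise, sum_filter, mem_graphOn]
    _ = 1 := by
          unfold fnWeight
          rw [sum_prod_of_apply_eq _ sum_condProb, div_self (condProb_pos hp0 v).ne']

theorem outputLaw_graphKernel (hp0 : ∀ a, 0 ≤ p a) (hp1 : ∑ a, p a = 1)
    (s : Finset (Supp p)) :
    outputLaw (fun v => p v.1) (graphKernel p) s = graphWeight p s := by
  unfold outputLaw
  by_cases hs : graphWeight p s = 0
  · simp [graphKernel, hs]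
  obtain ⟨g, rfl, hg⟩ := exists_graphOn_eq_of_graphWeight_ne_zero hs
  calc ∑ v, p v.1 * graphKernel p v (graphOn p g)
        = ∑ v ∈ graphOn p g, marginal p v.1.1 * graphWeight p (graphOn p g) := by
          refine (sum_subset (subset_univ _) fun v _ hv => by simp [graphKernel, hv]).symm.trans
            (sum_congr rfl fun v hv => ?_)
          rw [graphKernel, if_pos hv, ← marginal_mul_condProb hp0]
          field_simp [(condProb_pos hp0 v).ne']
    _ = graphWeight p (graphOn p g) := by
          rw [← sum_mul, sum_marginal_graphOn hp0 hg, hp1, one_mul]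

theorem mutualInfo_graphKernel (hp0 : ∀ a, 0 ≤ p a) (hp1 : ∑ a, p a = 1) :
    mutualInfo (fun v => p v.1) (graphKernel p) = condEntropy p := by
  rw [condEntropy_eq_sum_support hp0, mutualInfo, ← sum_neg_distrib]
  refine sum_congr rfl fun v _ => ?_
  simp_rw [outputLaw_graphKernel hp0 hp1]
  have hratio : ∀ s, graphKernel p v s ≠ 0 →
      graphKernel p v s / graphWeight p s = marginal p v.1.1 / p v.1 := by
    intro s hs
    unfold graphKernel at hs ⊢
    split_ifs at hs ⊢ with hv
    · have hw : graphWeight p s ≠ 0 := fun h0 => hs (by rw [h0, zero_div])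
      rw [← marginal_mul_condProb hp0]
      field_simp [(condProb_pos hp0 v).ne', (marginal_pos hp0 v).ne']
    · exact absurd rfl hs
  calc ∑ s, p v.1 * graphKernel p v s * log (graphKernel p v s / graphWeight p s)
      = ∑ s, p v.1 * graphKernel p v s * log (marginal p v.1.1 / p v.1) := by
        refine sum_congr rfl fun s _ => ?_
        rcases eq_or_ne (graphKernel p v s) 0 with hs | hs
        · simp [hs]
        · rw [hratio s hs]
    _ = -(p v.1 * log (p v.1 / marginal p v.1.1)) := by
        rw [← sum_mul, ← mul_sum, sum_graphKernel hp0, mul_one, ← inv_div, log_inv, mul_neg]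

end

/-- Let `G` be the graph on the support `S_{XY} = {(x,y) : p(x,y)>0}`
whose components are the complete graphs on the rows `{(x,y) ∈ S_{XY}}` (i.e.
two distinct support points are adjacent iff they share the first coordinate).
Then `H_G(X,Y) = H(Y|X) = -Σ_{(x,y)} p(x,y) log (p(x,y)/p(x))`. -/
theorem stmt14 {𝒳 𝒴 : Type*} [Fintype 𝒳] [Fintype 𝒴]
    (p : 𝒳 × 𝒴 → ℝ) (hp0 : ∀ a, 0 ≤ p a) (hp1 : ∑ a, p a = 1)
    (G : SimpleGraph {a : 𝒳 × 𝒴 // 0 < p a})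
    (hG : ∀ u v, G.Adj u v ↔ u ≠ v ∧ u.val.1 = v.val.1) :
    graphEntropy G (fun v => p v.val) =
      -∑ a : 𝒳 × 𝒴, p a * Real.log (p a / ∑ y : 𝒴, p (a.1, y)) := by
  have hindep : ∀ s : Finset (Supp p), (s : Set (Supp p)).Pairwise (fun a b => ¬ G.Adj a b) ↔
      Set.InjOn (fun v : Supp p => v.1.1) s := fun s => by
    simp only [Set.Pairwise, Set.InjOn, hG, not_and]
    exact ⟨fun h a ha b hb hab => by_contra fun hne => h ha hb hne hne hab,
      fun h a ha b hb hne _ hab => hne (h ha hb hab)⟩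
  show sInf _ = condEntropy p
  refine IsLeast.csInf_eq ⟨⟨graphKernel p, graphKernel_nonneg hp0, sum_graphKernel hp0,
    fun v s h => ?_, (mutualInfo_graphKernel hp0 hp1).symm⟩, ?_⟩
  · exact (graphKernel_pos h).imp_right (hindep s).2
  · rintro r ⟨q, hq0, hq1, hq, rfl⟩
    exact condEntropy_le_mutualInfo hq0 hq1 hp0 hp1 fun v s h => (hq v s h).imp_right (hindep s).1
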